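/- arXiv:0904.4365 — 4 statements merged into one kernel-verified Lean document; each statement's English description precedes it below -/
import Mathlib

section
/- Let f(x) = 1/x mod 1 be the Gauss map on (0,1). For every x in (0,1) such that f(x) is defined and nonzero (i.e., x is not a preimage of 0 under f or f^2), the derivative of f^2 at x satisfies |(f^2)'(x)| ≥ 9/4. -/
/-- The Gauss map `x ↦ 1/x mod 1`. -/
noncomputable def gauss (x : ℝ) : ℝ := Int.fract x⁻¹

lemma gauss_hasDerivAt (y : ℝ) (hy : 0 < y) (h : gauss y ≠ 0) :
    HasDerivAt gauss (-(y ^ 2)⁻¹) y := by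
  set n : ℤ := ⌊y⁻¹⌋ with hn
  have hlt : (n : ℝ) < y⁻¹ := by
    rcases lt_or_eq_of_le (Int.floor_le y⁻¹) with h' | h'
    · exact h'
    · exfalso; apply h; unfold gauss Int.fract; rw [← hn, ← h']; ring
  have hlt2 : y⁻¹ < (n : ℝ) + 1 := Int.lt_floor_add_one _
  have hev : ∀ᶠ z in nhds y, gauss z = (fun z : ℝ => z⁻¹ - (n : ℝ)) z := by
    have hcont : ContinuousAt (fun z : ℝ => z⁻¹) y := continuousAt_inv₀ hy.ne'
    have hmem : ∀ᶠ z in nhds y, z⁻¹ ∈ Set.Ioo (n : ℝ) ((n : ℝ) + 1) :=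
      hcont (Ioo_mem_nhds hlt hlt2)
    filter_upwards [hmem] with z hz
    unfold gauss Int.fract
    have : ⌊z⁻¹⌋ = n := by
      rw [Int.floor_eq_iff]
      exact ⟨hz.1.le, by exact_mod_cast hz.2⟩
    rw [this]
  have hd : HasDerivAt (fun z : ℝ => z⁻¹ - (n : ℝ)) (-(y ^ 2)⁻¹) y :=
    (hasDerivAt_inv hy.ne').sub_const _
  exact hd.congr_of_eventuallyEq hev

/-- For every `x ∈ (0,1)` such that `f(x)` and `f²(x)` are nonzero (i.e. `x` is not a
preimage of `0` under `f` or `f²`), the derivative of `f²` at `x` satisfies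
`|(f²)'(x)| ≥ 9/4`, where `f` is the Gauss map. -/
theorem gauss_second_iterate_deriv_ge (x : ℝ) (hx : x ∈ Set.Ioo (0:ℝ) 1)
    (h1 : gauss x ≠ 0) (h2 : gauss (gauss x) ≠ 0) :
    (9/4 : ℝ) ≤ |deriv (fun y => gauss (gauss y)) x| := by
  obtain ⟨hx0, hx1⟩ := hx
  have hg0 : 0 < gauss x := lt_of_le_of_ne (Int.fract_nonneg _) (Ne.symm h1)
  have hd1 : HasDerivAt gauss (-(x ^ 2)⁻¹) x := gauss_hasDerivAt x hx0 h1
  have hd2 : HasDerivAt gauss (-((gauss x) ^ 2)⁻¹) (gauss x) :=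
    gauss_hasDerivAt (gauss x) hg0 h2
  have hcomp : HasDerivAt (fun y => gauss (gauss y))
      ((-((gauss x) ^ 2)⁻¹) * (-(x ^ 2)⁻¹)) x := hd2.comp x hd1
  rw [hcomp.deriv]
  -- arithmetic: x * gauss x < 1/2
  set n : ℤ := ⌊x⁻¹⌋ with hn
  have hxinv : (1 : ℝ) < x⁻¹ := (one_lt_inv₀ hx0).mpr hx1
  have hn1 : (1 : ℤ) ≤ n := by
    rw [hn]; exact_mod_cast Int.le_floor.mpr (by exact_mod_cast hxinv.le)
  have hlt2 : x⁻¹ < (n : ℝ) + 1 := Int.lt_floor_add_one _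
  have hgx : x * gauss x = 1 - n * x := by
    unfold gauss Int.fract
    rw [← hn]
    field_simp
  have hnpos : (0 : ℝ) < (n : ℝ) + 1 := by positivity
  have hxlb : ((n : ℝ) + 1)⁻¹ < x := by
    rw [inv_lt_comm₀ hnpos hx0]; exact hlt2
  have hnx : (1 : ℝ) / 2 ≤ (n : ℝ) * x := by
    have hn1' : (1 : ℝ) ≤ (n : ℝ) := by exact_mod_cast hn1
    have hxlb' : 1 < x * ((n : ℝ) + 1) := by
      rw [inv_lt_iff_one_lt_mul₀ hnpos] at hxlb; linarith [hxlb]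
    have h1 : (n : ℝ) / ((n : ℝ) + 1) ≤ (n : ℝ) * x := by
      rw [div_le_iff₀ hnpos]
      nlinarith [hxlb', hn1']
    have h2 : (1 : ℝ) / 2 ≤ (n : ℝ) / ((n : ℝ) + 1) := by
      rw [div_le_div_iff₀ (by norm_num) hnpos]
      linarith
    linarith
  have hprod : 0 < x * gauss x := mul_pos hx0 hg0
  have hprodle : x * gauss x ≤ 1 / 2 := by rw [hgx]; linarith
  have key : (4 : ℝ) ≤ ((gauss x) ^ 2)⁻¹ * (x ^ 2)⁻¹ := by
    have h4 : (x * gauss x) ^ 2 ≤ (1 / 2) ^ 2 := by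
      apply pow_le_pow_left₀ hprod.le hprodle
    have hsq : 0 < (x * gauss x) ^ 2 := by positivity
    have : (4 : ℝ) ≤ ((x * gauss x) ^ 2)⁻¹ := by
      rw [le_inv_comm₀ (by norm_num) hsq]
      calc (x * gauss x) ^ 2 ≤ (1/2)^2 := h4
        _ = 4⁻¹ := by norm_num
    calc (4 : ℝ) ≤ ((x * gauss x) ^ 2)⁻¹ := this
      _ = ((gauss x) ^ 2)⁻¹ * (x ^ 2)⁻¹ := by rw [mul_pow, mul_inv, mul_comm]
  have habs : |(-((gauss x) ^ 2)⁻¹) * (-(x ^ 2)⁻¹)| = ((gauss x) ^ 2)⁻¹ * (x ^ 2)⁻¹ := by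
    rw [neg_mul_neg, abs_of_nonneg (by positivity)]
  rw [habs]
  linarith
end

section
/- Suppose finitely many players build an infinite sequence y = (y_i) over a finite or countable alphabet as follows: player B̃ first chooses an arbitrary finite prefix (y_i)_{i=1}^{b_0}; the rest of the sequence is divided into consecutive blocks of length n; in each block, the block's word is determined through a finite sequence of rounds in which B̃ offers two disjoint sets of candidate words and W̃ selects one of them, with the guarantee that W̃ makes at least cn selections per block. If 2^{cn} > n + 1, then for any target sequence x = (x_i)_{i=1}^∞, player W̃ has a strategy ensuring there exists N such that the word (x_i)_{i=1}^N does not occur as a factor of y, i.e., (x_1,…,x_N) ≠ (y_k,…,y_{k+N-1}) for all k ≥ 1. -/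
/-- Dangerous words: length-`n` factors of `x` at offsets `b0, …, b0+n`. -/
def dangerSet (A : Type) (x : ℕ → A) (n b0 : ℕ) : Set (Fin n → A) :=
  (fun r => fun j : Fin n => x (b0 + r + j.val)) '' ((Finset.range (n + 1) : Finset ℕ) : Set ℕ)

theorem dangerSet_finite (A : Type) (x : ℕ → A) (n b0 : ℕ) : (dangerSet A x n b0).Finite :=
  (Finset.range (n + 1)).finite_toSet.image _

/-- Number of dangerous words in a set `S`. -/
noncomputable def dcnt (A : Type) (x : ℕ → A) (n b0 : ℕ) (S : Set (Fin n → A)) : ℕ :=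
  (dangerSet A x n b0 ∩ S).ncard

theorem dcnt_univ_le (A : Type) (x : ℕ → A) (n b0 : ℕ) :
    dcnt A x n b0 Set.univ ≤ n + 1 := by
  unfold dcnt
  rw [Set.inter_univ]
  unfold dangerSet
  refine le_trans (Set.ncard_image_le (Finset.range (n + 1)).finite_toSet) ?_
  rw [Set.ncard_coe_finset]
  simp

theorem dcnt_add_le (A : Type) (x : ℕ → A) (n b0 : ℕ) (S T U : Set (Fin n → A))
    (hST : Disjoint S T) (hS : S ⊆ U) (hT : T ⊆ U) :
    dcnt A x n b0 S + dcnt A x n b0 T ≤ dcnt A x n b0 U := by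
  unfold dcnt
  have hD := dangerSet_finite A x n b0
  rw [← Set.ncard_union_eq (Set.disjoint_of_subset Set.inter_subset_right
        Set.inter_subset_right hST) (hD.inter_of_left _) (hD.inter_of_left _)]
  refine Set.ncard_le_ncard ?_ (hD.inter_of_left _)
  rintro a (⟨h1, h2⟩ | ⟨h1, h2⟩)
  · exact ⟨h1, hS h2⟩
  · exact ⟨h1, hT h2⟩

theorem mem_of_dcnt_singleton (A : Type) (x : ℕ → A) (n b0 : ℕ) (w : Fin n → A)
    (hw : w ∈ dangerSet A x n b0) : 0 < dcnt A x n b0 {w} := by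
  unfold dcnt
  rw [Set.ncard_pos ((dangerSet_finite A x n b0).inter_of_left _)]
  exact ⟨w, hw, rfl⟩

/-- **Sequence-building game.**  Players `B̃` and `W̃` build an infinite sequence
`y` over a finite or countable alphabet `A`.  `B̃` first chooses an arbitrary prefix
`(y_i)_{i<b0}`; the rest of `y` is divided into consecutive blocks of length `n`.
In block `bl` the block's word `w bl` is determined through `m bl` rounds: in round `j`
`B̃` offers two disjoint subsets `(off bl j).1, (off bl j).2` of the currently remaining
candidate words `Sst bl j`, and `W̃` (via a strategy `σ`, knowing `b0`, the block index
and the in-block history) selects one of them; after the last round exactly one word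
remains, which becomes the block.  `W̃` is guaranteed at least `c·n` selections per
block.  If `2^{c n} > n + 1`, then for any target sequence `x`, `W̃` has a strategy
ensuring that some prefix `(x_i)_{i<N}` never occurs as a factor of `y`. -/
theorem sequence_building_game (A : Type) [Countable A] [Nonempty A]
    (c : ℝ) (hc : 0 < c) (n : ℕ) (hn : ((n : ℝ) + 1) < (2 : ℝ) ^ (c * (n : ℝ))) (x : ℕ → A) :
    ∃ σ : ℕ → ℕ → List (Set (Fin n → A) × Set (Fin n → A)) →
        (Set (Fin n → A) × Set (Fin n → A)) → Bool,
      ∀ (b0 : ℕ) (p : ℕ → A) (m : ℕ → ℕ)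
        (Sst : ℕ → ℕ → Set (Fin n → A))
        (off : ℕ → ℕ → Set (Fin n → A) × Set (Fin n → A))
        (w : ℕ → Fin n → A) (y : ℕ → A),
        (∀ bl, c * (n : ℝ) ≤ (m bl : ℝ)) →
        (∀ bl, Sst bl 0 = Set.univ) →
        (∀ bl j, j < m bl →
          Disjoint (off bl j).1 (off bl j).2 ∧
          (off bl j).1 ⊆ Sst bl j ∧ (off bl j).2 ⊆ Sst bl j ∧
          Sst bl (j + 1) =
            (if σ b0 bl (List.ofFn fun i : Fin j => off bl i.val) (off bl j)
              then (off bl j).1 else (off bl j).2)) →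
        (∀ bl, Sst bl (m bl) = {w bl}) →
        (∀ i, i < b0 → y i = p i) →
        (∀ bl (j : Fin n), y (b0 + bl * n + j.val) = w bl j) →
        ∃ N, 0 < N ∧ ∀ k : ℕ, ∃ i < N, x i ≠ y (k + i) := by
  classical
  -- n ≥ 1
  have hn1 : 1 ≤ n := by
    by_contra h
    interval_cases n
    simp at hn
  refine ⟨fun b0 _ _ o => decide (dcnt A x n b0 o.1 ≤ dcnt A x n b0 o.2), ?_⟩
  intro b0 p m Sst off w y hm hS0 hoff hSm hyp hyw
  -- every block word avoids the dangerous set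
  have hkey : ∀ bl, w bl ∉ dangerSet A x n b0 := by
    intro bl hw
    -- 2^(m bl) > n+1
    have hpow : (n : ℕ) + 1 < 2 ^ (m bl) := by
      have h1 : (2 : ℝ) ^ (c * (n : ℝ)) ≤ (2 : ℝ) ^ ((m bl : ℕ) : ℝ) := by
        apply Real.rpow_le_rpow_of_exponent_le (by norm_num) (hm bl)
      have h2 : (2 : ℝ) ^ ((m bl : ℕ) : ℝ) = ((2 ^ (m bl) : ℕ) : ℝ) := by
        rw [Real.rpow_natCast]; push_cast; ring
      have : ((n : ℝ) + 1) < ((2 ^ (m bl) : ℕ) : ℝ) := by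
        rw [← h2]; linarith
      exact_mod_cast this
    -- invariant: danger count halves each round
    have hinv : ∀ j, j ≤ m bl → 2 ^ j * dcnt A x n b0 (Sst bl j) ≤ n + 1 := by
      intro j
      induction j with
      | zero => intro _; simpa [hS0 bl] using dcnt_univ_le A x n b0
      | succ j ih =>
        intro hj
        have hjlt : j < m bl := by omega
        obtain ⟨hdisj, hs1, hs2, hupd⟩ := hoff bl j hjlt
        have hsum := dcnt_add_le A x n b0 _ _ _ hdisj hs1 hs2
        have h2 : 2 * dcnt A x n b0 (Sst bl (j+1)) ≤ dcnt A x n b0 (Sst bl j) := by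
          rw [hupd]
          by_cases hle : dcnt A x n b0 (off bl j).1 ≤ dcnt A x n b0 (off bl j).2
          · rw [if_pos (by exact decide_eq_true hle)]; omega
          · rw [if_neg (by simpa using hle)]; omega
        calc 2 ^ (j+1) * dcnt A x n b0 (Sst bl (j+1))
            = 2 ^ j * (2 * dcnt A x n b0 (Sst bl (j+1))) := by ring
          _ ≤ 2 ^ j * dcnt A x n b0 (Sst bl j) := Nat.mul_le_mul_left _ h2
          _ ≤ n + 1 := ih (le_of_lt hjlt)
    have hfin := hinv (m bl) le_rfl
    rw [hSm bl] at hfin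
    have hpos := mem_of_dcnt_singleton A x n b0 (w bl) hw
    have : 2 ^ (m bl) ≤ 2 ^ (m bl) * dcnt A x n b0 {w bl} :=
      Nat.le_mul_of_pos_right _ hpos
    omega
  -- conclude
  refine ⟨b0 + 2 * n, by omega, ?_⟩
  intro k
  by_contra hcon
  push_neg at hcon
  -- find aligned block inside the occurrence
  set bl := k / n + 1 with hbldef
  have hB : k < bl * n := by
    have h2 := Nat.div_add_mod k n
    have h3 : k % n < n := Nat.mod_lt _ (by omega)
    calc k = n * (k / n) + k % n := h2.symm
      _ < n * (k / n) + n := Nat.add_lt_add_left h3 _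
      _ = bl * n := by rw [hbldef]; ring
  have hC : bl * n ≤ k + n := by
    have h4 := Nat.div_mul_le_self k n
    calc bl * n = k / n * n + n := by rw [hbldef]; ring
      _ ≤ k + n := Nat.add_le_add_right h4 n
  obtain ⟨P, hP⟩ : ∃ P, bl * n = P := ⟨_, rfl⟩
  rw [hP] at hB hC
  set r := P - k with hr
  refine hkey bl ?_
  refine ⟨r, by simp only [Finset.coe_range, Set.mem_Iio]; omega, ?_⟩
  funext j
  show x (b0 + r + j.val) = w bl j
  have hjn := j.isLt
  have hi : b0 + r + j.val < b0 + 2 * n := by omega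
  rw [hcon _ hi]
  have hk : k + (b0 + r + j.val) = b0 + bl * n + j.val := by rw [hP]; omega
  rw [hk, hyw bl j]
end

section
/- Let E(f) ⊂ [0,1] be the set of endpoints of generation-1 cylinders of an interval map f as in the setup, and suppose there exists n ∈ ℕ such that the n-th iterated set of accumulation points Acc^n(E(f)) is empty. Then for any α ≤ 1/2, any β > 0, any k ∈ ℕ, and any starting interval, the player White in the (α,β)-game can in finitely many moves place his interval inside a single cylinder of generation k, thereby avoiding all endpoints of generation-k cylinders. -/
/-!
White avoids any set `F` with `Acc^m F = ∅`, by induction on `m`: he first avoids the closed set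
`Acc F`, after which only finitely many points of `F` remain in Black's interval, and a single
point is avoided within two moves because `α ≤ 1/2`.

The cylinders are reached by induction on the generation `k`. Once White's interval lies in a
generation-`k` cylinder, Black's next interval `J` lies there too, and `f^k` is continuous and
injective on `J`. Accumulation points of the set of points of `J` that `f^k` sends into the
boundary `D` of the generation-1 cylinders are therefore sent to accumulation points of `D`, apart
from the two endpoints of `J`; so this bad set again has a vanishing iterated derived set, and an
interval avoiding it is mapped into the interior of a single generation-1 cylinder, i.e. it lies
in a generation-`(k+1)` cylinder. Finally `D ⊆ closure E(f) ∪ {0, 1}` because the generation-1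
cylinders have full measure, so the derived sets of `D` are controlled by those of `E(f)`.
-/

/-- A closed interval given by its center `c` and radius `r > 0`. -/
structure SInt where
  c : ℝ
  r : ℝ
  rpos : 0 < r

/-- The closed interval determined by an `SInt`. -/
def SInt.set (I : SInt) : Set ℝ := Set.Icc (I.c - I.r) (I.c + I.r)

/-- A legal move in Schmidt's game: `J ⊆ I` and `|J| = ρ |I|`. -/
def legalMove (ρ : ℝ) (J I : SInt) : Prop := J.set ⊆ I.set ∧ J.r = ρ * I.r

/-- `E` is `(α,β)`-winning for Schmidt's game on `[0,1]`: White has a (history-dependent)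
strategy `ws` such that against every legal play `B` of Black (with `B 0 ⊆ [0,1]`), all of
White's moves are legal and any point lying in all of White's intervals belongs to `E`. -/
def IsWinningParam (α β : ℝ) (E : Set ℝ) : Prop :=
  ∃ ws : List SInt → SInt,
    ∀ B W : ℕ → SInt,
      (B 0).set ⊆ Set.Icc (0:ℝ) 1 →
      (∀ n, W n = ws (List.ofFn fun i : Fin (n + 1) => B i.val)) →
      (∀ n, legalMove β (B (n + 1)) (W n)) →
      (∀ n, legalMove α (W n) (B n)) ∧ ∀ x : ℝ, (∀ n, x ∈ (W n).set) → x ∈ E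

/-- `E` is `α`-winning if it is `(α,β)`-winning for every `β ∈ (0,1)`. -/
def IsWinning (α : ℝ) (E : Set ℝ) : Prop :=
  ∀ β : ℝ, 0 < β → β < 1 → IsWinningParam α β E

/-- In the `(α,β)`-game started from the interval `I`, White has a strategy guaranteeing
(playing legally) that after finitely many moves some interval `W j` satisfies the
target predicate `T`. -/
def WhiteCanReach (α β : ℝ) (I : SInt) (T : Set ℝ → Prop) : Prop :=
  ∃ ws : List SInt → SInt,
    ∀ B W : ℕ → SInt,
      B 0 = I →
      (∀ n, W n = ws (List.ofFn fun i : Fin (n + 1) => B i.val)) →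
      (∀ n, legalMove β (B (n + 1)) (W n)) →
      (∀ n, legalMove α (W n) (B n)) ∧ ∃ j, T (W j).set

/-- An expanding interval map as in the setup: `f` is defined on countably many disjoint
subintervals `[a i, b i)` of `[0,1)` whose lengths sum to `1`, is strictly monotone and
onto `[0,1)` on each piece, and expands distances on each piece. -/
structure ExpandingSystem (ι : Type) where
  f : ℝ → ℝ
  a : ι → ℝ
  b : ι → ℝ
  hab : ∀ i, a i < b i
  hsub : ∀ i, Set.Ico (a i) (b i) ⊆ Set.Ico (0:ℝ) 1
  hdisj : Pairwise fun i j => Disjoint (Set.Ico (a i) (b i)) (Set.Ico (a j) (b j))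
  hsum : ∑' i, (b i - a i) = 1
  hmono : ∀ i, StrictMonoOn f (Set.Ico (a i) (b i)) ∨ StrictAntiOn f (Set.Ico (a i) (b i))
  honto : ∀ i, f '' Set.Ico (a i) (b i) = Set.Ico (0:ℝ) 1
  hexp : ∀ i, ∀ x ∈ Set.Ico (a i) (b i), ∀ y ∈ Set.Ico (a i) (b i), |x - y| ≤ |f x - f y|

/-- The generation-`n` cylinder `C_{w 0 … w (n-1)}` of an expanding system. -/
def ExpandingSystem.cyl {ι : Type} (S : ExpandingSystem ι) (w : ℕ → ι) (n : ℕ) : Set ℝ :=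
  {x | ∀ k < n, S.f^[k] x ∈ Set.Ico (S.a (w k)) (S.b (w k))}

/-- Condition (i): there is `α₀ > 0` such that for each generation `k`, each starting
interval `I ⊆ [0,1]` and each `β ∈ (0,1)`, in the `(α₀,β)`-game White can in finitely many
turns place his interval inside a single generation-`k` cylinder. -/
def CondI {ι : Type} (S : ExpandingSystem ι) (α₀ : ℝ) : Prop :=
  ∀ (k : ℕ) (I : SInt), I.set ⊆ Set.Icc (0:ℝ) 1 →
    ∀ β : ℝ, 0 < β → β < 1 →
      WhiteCanReach α₀ β I fun s => ∃ w : ℕ → ι, s ⊆ S.cyl w k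

/-- Condition (ii): a uniform cylinder-ratio decay `|C_{x₁…x_{n+m}}| ≤ g(m) |C_{x₁…x_n}|`
with `g(m) → 0`. -/
def CondII {ι : Type} (S : ExpandingSystem ι) (g : ℕ → ℝ) : Prop :=
  (∀ m, 0 ≤ g m) ∧ Filter.Tendsto g Filter.atTop (nhds 0) ∧
    ∀ (w : ℕ → ι) (n m : ℕ),
      MeasureTheory.volume (S.cyl w (n + m)) ≤
        ENNReal.ofReal (g m) * MeasureTheory.volume (S.cyl w n)

/-- `x` has a well-defined symbolic expansion: every iterate lies in some piece. -/
def HasExpansion {ι : Type} (S : ExpandingSystem ι) (x : ℝ) : Prop :=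
  ∃ w : ℕ → ι, ∀ k : ℕ, S.f^[k] x ∈ Set.Ico (S.a (w k)) (S.b (w k))

/-- The set `G_f(x)` of points whose forward `f`-orbit closure avoids `x`. -/
def Gset (f : ℝ → ℝ) (x : ℝ) : Set ℝ :=
  {y | y ∈ Set.Ico (0:ℝ) 1 ∧ x ∉ closure (Set.range fun n : ℕ => f^[n] y)}

/-- The set of accumulation points of `E`. -/
def AccSet (E : Set ℝ) : Set ℝ := {x | AccPt x (Filter.principal E)}

open Set MeasureTheory

lemma Set.Finite.derivedSet_eq_empty {X : Type*} [TopologicalSpace X] [T1Space X] {A : Set X}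
    (hA : A.Finite) : derivedSet A = ∅ := by
  refine eq_empty_iff_forall_notMem.mpr fun x hx => ?_
  rw [mem_derivedSet, accPt_principal_iff_clusterPt, ← mem_closure_iff_clusterPt,
    (hA.subset sdiff_subset).isClosed.closure_eq] at hx
  exact hx.2 rfl

lemma finite_inter_of_disjoint_derivedSet {X : Type*} [TopologicalSpace X] {K A : Set X}
    (hK : IsCompact K) (h : Disjoint K (derivedSet A)) : (A ∩ K).Finite := by
  by_contra hinf
  obtain ⟨x, hxK, hx⟩ := Set.Infinite.exists_accPt_of_subset_isCompact hinf hK inter_subset_right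
  exact disjoint_left.mp h hxK (derivedSet_mono _ _ inter_subset_left hx)

lemma continuousOn_of_monotoneOn_of_image_eq {f : ℝ → ℝ} {s t : Set ℝ} [s.OrdConnected]
    [t.OrdConnected] (hf : MonotoneOn f s) (hst : f '' s = t) : ContinuousOn f s := by
  have hmaps : MapsTo f s t := hst ▸ mapsTo_image f s
  rw [continuousOn_iff_continuous_domRestrict]
  refine continuous_subtype_val.comp (Monotone.continuous_of_surjective
    (f := hmaps.restrict f s t) (fun x y hxy => hf x.2 y.2 hxy) ?_)
  rintro ⟨y, hy⟩
  obtain ⟨x, hx, rfl⟩ := hst ▸ hy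
  exact ⟨⟨x, hx⟩, rfl⟩

lemma derivedSet_Icc_inter_preimage_subset {F : ℝ → ℝ} {a b : ℝ}
    (hF : ContinuousOn F (Icc a b)) (hinj : InjOn F (Icc a b)) (T : Set ℝ) :
    derivedSet (Icc a b ∩ F ⁻¹' T) ⊆ Icc a b ∩ F ⁻¹' derivedSet T ∪ {a, b} := by
  intro x hx
  have hxab : x ∈ Icc a b :=
    isClosed_Icc.closure_subset_iff.mpr inter_subset_left (derivedSet_subset_closure _ hx)
  by_cases hend : x = a ∨ x = b
  · exact Or.inr hend
  obtain ⟨hxa, hxb⟩ := not_or.mp hend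
  have hFx : ContinuousAt F x :=
    hF.continuousAt (Icc_mem_nhds (hxab.1.lt_of_ne' hxa) (hxab.2.lt_of_ne hxb))
  refine Or.inl ⟨hxab, accPt_iff_frequently.mpr (hFx.tendsto.frequently ?_)⟩
  exact (accPt_iff_frequently.mp hx).mono fun y ⟨hyx, hy, hyT⟩ =>
    ⟨fun h => hyx (hinj hy hxab h), hyT⟩

lemma iterate_derivedSet_Icc_inter_preimage_subset {F : ℝ → ℝ} {a b : ℝ}
    (hF : ContinuousOn F (Icc a b)) (hinj : InjOn F (Icc a b)) (T : Set ℝ) (m : ℕ) :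
    derivedSet^[m] (Icc a b ∩ F ⁻¹' T) ⊆ Icc a b ∩ F ⁻¹' derivedSet^[m] T ∪ {a, b} := by
  induction m with
  | zero => exact subset_union_left
  | succ m ih =>
    simp only [Function.iterate_succ_apply']
    calc derivedSet (derivedSet^[m] (Icc a b ∩ F ⁻¹' T))
        ⊆ derivedSet (Icc a b ∩ F ⁻¹' derivedSet^[m] T ∪ {a, b}) := derivedSet_mono _ _ ih
      _ = derivedSet (Icc a b ∩ F ⁻¹' derivedSet^[m] T) := by
        rw [derivedSet_union, (toFinite ({a, b} : Set ℝ)).derivedSet_eq_empty, union_empty]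
      _ ⊆ _ := derivedSet_Icc_inter_preimage_subset hF hinj _

namespace SInt

def shrink (J : SInt) {ρ : ℝ} (hρ : 0 < ρ) (c : ℝ) : SInt := ⟨c, ρ * J.r, mul_pos hρ J.rpos⟩

variable {J : SInt} {α p : ℝ}

lemma set_nonempty : J.set.Nonempty :=
  ⟨J.c, by simp only [SInt.set, mem_Icc]; constructor <;> linarith [J.rpos]⟩

lemma legalMove_shrink {ρ : ℝ} (hρ : 0 < ρ) {c : ℝ} (hc : |c - J.c| ≤ (1 - ρ) * J.r) :
    legalMove ρ (J.shrink hρ c) J := by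
  refine ⟨?_, rfl⟩
  rw [abs_le] at hc
  simp only [SInt.set, shrink]
  exact Icc_subset_Icc (by linarith) (by linarith)

lemma legalMove_shrink_center (hα : 0 < α) (hα1 : α ≤ 1) :
    legalMove α (J.shrink hα J.c) J :=
  legalMove_shrink hα (by rw [sub_self, abs_zero]; nlinarith [J.rpos])

/-- The `α`-subinterval of `J` at the end of `J` away from `p`. -/
noncomputable def awayFrom (J : SInt) (hα : 0 < α) (p : ℝ) : SInt :=
  J.shrink hα (if p ≤ J.c then J.c + (1 - α) * J.r else J.c - (1 - α) * J.r)

lemma legalMove_awayFrom (hα : 0 < α) (hα1 : α ≤ 1) : legalMove α (J.awayFrom hα p) J := by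
  have hr := J.rpos
  refine legalMove_shrink hα ?_
  split_ifs <;> rw [abs_le] <;> constructor <;> nlinarith

lemma awayFrom_subset_Ici (hα : 0 < α) (hα2 : α ≤ 1 / 2) (hp : p ≤ J.c) :
    (J.awayFrom hα p).set ⊆ Ici J.c := by
  intro x hx
  simp only [awayFrom, shrink, SInt.set, if_pos hp, mem_Icc] at hx
  have : 0 ≤ (1 - 2 * α) * J.r := mul_nonneg (by linarith) J.rpos.le
  exact mem_Ici.mpr (by linarith [hx.1])

lemma notMem_awayFrom (hα : 0 < α) (hα2 : α ≤ 1 / 2) (hp : p ≠ J.c) :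
    p ∉ (J.awayFrom hα p).set := by
  have : 0 ≤ (1 - 2 * α) * J.r := mul_nonneg (by linarith) J.rpos.le
  simp only [awayFrom, shrink, SInt.set, mem_Icc]
  rcases hp.lt_or_gt with hp | hp
  · rw [if_pos hp.le]; intro h; linarith [h.1]
  · rw [if_neg hp.not_ge]; intro h; linarith [h.2]

end SInt

namespace List

variable {α : Type*}

lemma getLastD_ofFn_val (B : ℕ → α) (n : ℕ) (d : α) :
    (ofFn fun i : Fin (n + 1) => B i.val).getLastD d = B n := by
  rw [getLastD_eq_getLast?, getLast?_eq_getElem?, List.getElem?_ofFn]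
  simp

end List

/-- White can force `T` from Black's interval `J`. Being inductive, this game tree has only finite
branches: `T` is reached after finitely many moves whatever Black plays. -/
inductive CanForce (α β : ℝ) (T : Set ℝ → Prop) : SInt → Prop
  | now {J W : SInt} : legalMove α W J → T W.set → CanForce α β T J
  | later {J W : SInt} :
      legalMove α W J → (∀ B, legalMove β B W → CanForce α β T B) → CanForce α β T J

namespace CanForce

variable {α β : ℝ} {T T' : Set ℝ → Prop} {J : SInt}

lemma of_forall (hα : 0 < α) (hα1 : α ≤ 1) (h : ∀ X : SInt, X.set ⊆ J.set → T X.set) :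
    CanForce α β T J :=
  now (J.legalMove_shrink_center hα hα1) (h _ (J.legalMove_shrink_center hα hα1).1)

lemma mono (h : CanForce α β T J) (hT : ∀ X : SInt, X.set ⊆ J.set → T X.set → T' X.set) :
    CanForce α β T' J := by
  induction h with
  | now hW hTW => exact now hW (hT _ hW.1 hTW)
  | later hW _ ih =>
    exact later hW fun B hB => ih B hB fun X hXB => hT X (hXB.trans (hB.1.trans hW.1))

lemma bind (h : CanForce α β T J)
    (hT : ∀ W : SInt, W.set ⊆ J.set → T W.set → ∀ B, legalMove β B W → CanForce α β T' B) :
    CanForce α β T' J := by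
  induction h with
  | now hW hTW => exact later hW (hT _ hW.1 hTW)
  | later hW _ ih =>
    exact later hW fun B hB => ih B hB fun W hWB => hT W (hWB.trans (hB.1.trans hW.1))

lemma whiteCanReach (hα : 0 < α) (hα1 : α ≤ 1) (h : CanForce α β T J) :
    WhiteCanReach α β J T := by
  induction h with
  | @now J W hW hT =>
    refine ⟨fun L => if L.length ≤ 1 then W else (L.getLastD W).shrink hα (L.getLastD W).c,
      fun B W' hB0 hW' _ => ⟨fun n => ?_, 0, by simpa [hW' 0] using hT⟩⟩
    cases n with
    | zero => simpa [hW' 0, hB0] using hW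
    | succ n =>
      rw [hW' (n + 1)]
      dsimp only
      rw [if_neg (by simp), List.getLastD_ofFn_val]
      exact (B (n + 1)).legalMove_shrink_center hα hα1
  | @later J W hW _ ih =>
    classical
    choose σ hσ using ih
    refine ⟨fun L => match L with
      | _ :: B₁ :: L' => if h : legalMove β B₁ W then σ B₁ h (B₁ :: L') else W
      | _ => W, fun B W' hB0 hW' hB => ?_⟩
    have hW0 : W' 0 = W := by rw [hW' 0]; rfl
    have hB1 : legalMove β (B 1) W := hW0 ▸ hB 0
    obtain ⟨hlegal, j, hj⟩ := hσ (B 1) hB1 (fun m => B (m + 1)) (fun m => W' (m + 1)) rfl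
      (fun m => by rw [hW' (m + 1)]; simp [List.ofFn_succ, hB1])
      (fun m => hB (m + 1))
    refine ⟨fun n => ?_, j + 1, hj⟩
    cases n with
    | zero => exact hB0 ▸ hW0 ▸ hW
    | succ n => exact hlegal n

end CanForce

section Avoidance

variable {α β : ℝ}

lemma canForce_notMem (hα : 0 < α) (hα2 : α ≤ 1 / 2) (p : ℝ) (J : SInt) :
    CanForce α β (fun s => p ∉ s) J := by
  have hα1 : α ≤ 1 := by linarith
  by_cases hp : p = J.c
  · -- `p` may survive White's first move, but then it lies left of Black's next centre.
    refine .later (J.legalMove_awayFrom hα hα1 (p := p)) fun B hB =>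
      .now (B.legalMove_awayFrom hα hα1) (B.notMem_awayFrom hα hα2 ?_)
    have hBc : J.c ≤ B.c - B.r :=
      J.awayFrom_subset_Ici hα hα2 hp.le (hB.1 ⟨le_rfl, by linarith [B.rpos]⟩)
    linarith [B.rpos]
  · exact .now (J.legalMove_awayFrom hα hα1) (J.notMem_awayFrom hα hα2 hp)

lemma canForce_disjoint_of_finite (hα : 0 < α) (hα2 : α ≤ 1 / 2) {F : Set ℝ} (hF : F.Finite)
    (J : SInt) : CanForce α β (fun s => Disjoint s F) J := by
  induction F, hF using Set.Finite.induction_on generalizing J with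
  | empty => exact .of_forall hα (by linarith) fun X _ => disjoint_empty _
  | @insert p F _ _ ih =>
    refine (canForce_notMem hα hα2 p J).bind fun W _ hpW B hB => (ih B).mono fun X hXB hXF => ?_
    exact disjoint_insert_right.mpr ⟨fun hpX => hpW (hB.1 (hXB hpX)), hXF⟩

lemma canForce_disjoint_of_iterate_derivedSet_eq_empty (hα : 0 < α) (hα2 : α ≤ 1 / 2) {m : ℕ}
    {F : Set ℝ} (hF : derivedSet^[m] F = ∅) (J : SInt) :
    CanForce α β (fun s => Disjoint s F) J := by
  induction m generalizing F J with
  | zero =>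
    exact .of_forall hα (by linarith) fun X _ => (show F = ∅ from hF) ▸ disjoint_empty _
  | succ m ih =>
    refine (ih (F := derivedSet F) hF J).bind fun W _ hW B hB => ?_
    have hfin := finite_inter_of_disjoint_derivedSet isCompact_Icc (hW.mono_left hB.1)
    refine (canForce_disjoint_of_finite hα hα2 hfin B).mono fun X hXB hX => ?_
    exact disjoint_left.mpr fun x hxX hxF => disjoint_left.mp hX hxX ⟨hxF, hXB hxX⟩

end Avoidance

namespace ExpandingSystem

lemma nonempty_index {ι : Type} (S : ExpandingSystem ι) : Nonempty ι := by
  by_contra h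
  rw [not_nonempty_iff] at h
  simpa using S.hsum

variable {ι : Type} (S : ExpandingSystem ι)

lemma mapsTo_piece (i : ι) : MapsTo S.f (Ico (S.a i) (S.b i)) (Ico 0 1) :=
  S.honto i ▸ mapsTo_image _ _

lemma strictMonoOn_piece (i : ι) : StrictMonoOn S.f (Ico (S.a i) (S.b i)) := by
  -- a decreasing branch would make `f (a i)` the maximum of `[0, 1)`
  refine (S.hmono i).resolve_right fun hanti => ?_
  have ha : S.a i ∈ Ico (S.a i) (S.b i) := ⟨le_rfl, S.hab i⟩
  have hfa := S.mapsTo_piece i ha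
  obtain ⟨x, hx, hfx⟩ : (S.f (S.a i) + 1) / 2 ∈ S.f '' Ico (S.a i) (S.b i) := by
    rw [S.honto i]
    constructor <;> linarith [hfa.1, hfa.2]
  have := hanti.antitoneOn ha hx hx.1
  linarith [hfa.2]

lemma continuousOn_piece (i : ι) : ContinuousOn S.f (Ico (S.a i) (S.b i)) :=
  continuousOn_of_monotoneOn_of_image_eq (S.strictMonoOn_piece i).monotoneOn (S.honto i)

lemma cyl_zero (w : ℕ → ι) : S.cyl w 0 = univ := by
  ext
  simp [cyl]

lemma cyl_succ (w : ℕ → ι) (k : ℕ) :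
    S.cyl w (k + 1) = S.cyl w k ∩ S.f^[k] ⁻¹' Ico (S.a (w k)) (S.b (w k)) := by
  ext x
  refine ⟨fun h => ⟨fun j hj => h j (hj.trans k.lt_succ_self), h k k.lt_succ_self⟩,
    fun ⟨h, hk⟩ j hj => ?_⟩
  rcases Nat.lt_succ_iff_lt_or_eq.mp hj with hj | rfl
  exacts [h j hj, hk]

lemma strictMonoOn_iterate_cyl (w : ℕ → ι) (k : ℕ) : StrictMonoOn S.f^[k] (S.cyl w k) := by
  induction k with
  | zero => exact S.cyl_zero w ▸ strictMono_id.strictMonoOn univ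
  | succ k ih =>
    rw [cyl_succ, Function.iterate_succ']
    exact (S.strictMonoOn_piece (w k)).comp (ih.mono inter_subset_left) fun x hx => hx.2

lemma continuousOn_iterate_cyl (w : ℕ → ι) (k : ℕ) : ContinuousOn S.f^[k] (S.cyl w k) := by
  induction k with
  | zero => exact continuousOn_id
  | succ k ih =>
    rw [cyl_succ, Function.iterate_succ']
    exact (S.continuousOn_piece (w k)).comp (ih.mono inter_subset_left) fun x hx => hx.2

variable {S}

lemma iterate_mem_Icc_of_mem_cyl {w : ℕ → ι} {k : ℕ} {x : ℝ} (hx : x ∈ S.cyl w k)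
    (hx01 : x ∈ Icc 0 1) : S.f^[k] x ∈ Icc 0 1 := by
  cases k with
  | zero => exact hx01
  | succ k =>
    rw [Function.iterate_succ_apply']
    exact Ico_subset_Icc_self (S.mapsTo_piece _ (hx k k.lt_succ_self))

lemma mem_cyl_update_succ {w : ℕ → ι} {k : ℕ} {i : ι} {x : ℝ} (hx : x ∈ S.cyl w k)
    (hfx : S.f^[k] x ∈ Ico (S.a i) (S.b i)) : x ∈ S.cyl (Function.update w k i) (k + 1) := by
  intro j hj
  rcases Nat.lt_succ_iff_lt_or_eq.mp hj with hj | rfl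
  · rw [Function.update_of_ne hj.ne]
    exact hx j hj
  · rwa [Function.update_self]

variable (S) in
def boundarySet : Set ℝ := Icc 0 1 \ ⋃ i, Ioo (S.a i) (S.b i)

lemma exists_subset_Ioo_of_isPreconnected {s : Set ℝ} (hs : IsPreconnected s)
    (hne : s.Nonempty) (h01 : s ⊆ Icc 0 1) (hdisj : Disjoint s S.boundarySet) :
    ∃ i, s ⊆ Ioo (S.a i) (S.b i) := by
  have hcover : s ⊆ ⋃ i, Ioo (S.a i) (S.b i) := fun x hx =>
    by_contra fun h => disjoint_left.mp hdisj hx ⟨h01 hx, h⟩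
  obtain ⟨x, hx⟩ := hne
  obtain ⟨i, hxi⟩ := mem_iUnion.mp (hcover hx)
  refine ⟨i, hs.subset_left_of_subset_union (v := ⋃ (j) (_ : j ≠ i), Ioo (S.a j) (S.b j))
    isOpen_Ioo (isOpen_biUnion fun _ _ => isOpen_Ioo) ?_ (fun y hy => ?_) ⟨x, hx, hxi⟩⟩
  · simp only [disjoint_iUnion_right]
    exact fun j hji => (S.hdisj hji.symm).mono Ioo_subset_Ico_self Ioo_subset_Ico_self
  · obtain ⟨j, hyj⟩ := mem_iUnion.mp (hcover hy)
    by_cases hji : j = i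
    · exact Or.inl (hji ▸ hyj)
    · exact Or.inr (mem_biUnion hji hyj)

variable (S) [Countable ι]

lemma volume_iUnion_pieces : volume (⋃ i, Ico (S.a i) (S.b i)) = 1 := by
  have hsummable : Summable fun i => S.b i - S.a i :=
    by_contra fun h => by simpa [tsum_eq_zero_of_not_summable h] using S.hsum
  rw [measure_iUnion S.hdisj fun _ => measurableSet_Ico]
  simp_rw [Real.volume_Ico]
  rw [← ENNReal.ofReal_tsum_of_nonneg (fun i => sub_nonneg.mpr (S.hab i).le) hsummable, S.hsum,
    ENNReal.ofReal_one]

lemma exists_inter_Ioo_nonempty {u v : ℝ} (huv : u < v) (h : Ioo u v ⊆ Ico 0 1) :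
    ∃ i, (Ico (S.a i) (S.b i) ∩ Ioo u v).Nonempty := by
  by_contra! hempty
  have hdisj : Disjoint (⋃ i, Ico (S.a i) (S.b i)) (Ioo u v) :=
    disjoint_iUnion_left.mpr fun i => disjoint_iff_inter_eq_empty.mpr (hempty i)
  have := measure_mono (μ := volume) (union_subset (iUnion_subset S.hsub) h)
  rw [measure_union hdisj measurableSet_Ioo, S.volume_iUnion_pieces, Real.volume_Ico,
    Real.volume_Ioo] at this
  rw [sub_zero, ← ENNReal.ofReal_one, ← ENNReal.ofReal_add zero_le_one (by linarith),
    ENNReal.ofReal_le_ofReal_iff zero_le_one] at this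
  linarith

lemma boundarySet_subset : S.boundarySet ⊆ closure (range S.a ∪ range S.b) ∪ {0, 1} := by
  rintro x ⟨⟨hx0, hx1⟩, hx⟩
  rcases hx0.eq_or_lt with rfl | hx0
  · simp
  rcases hx1.eq_or_lt with rfl | hx1
  · simp
  refine Or.inl (Metric.mem_closure_iff.mpr fun ε hε => ?_)
  have hu : max (x - ε) 0 < x := max_lt (by linarith) hx0
  have hv : x < min (x + ε) 1 := lt_min (by linarith) hx1
  obtain ⟨i, y, ⟨hay, hyb⟩, hyu, hyv⟩ := S.exists_inter_Ioo_nonempty (hu.trans hv)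
    fun y hy => ⟨(le_max_right _ _).trans hy.1.le, hy.2.trans_le (min_le_right _ _)⟩
  have hxi : x ∉ Ioo (S.a i) (S.b i) := fun h => hx (mem_iUnion.mpr ⟨i, h⟩)
  rcases le_or_gt x (S.a i) with hxa | hax
  · refine ⟨S.a i, Or.inl ⟨i, rfl⟩, ?_⟩
    rw [Real.dist_eq, abs_lt]
    constructor <;> linarith [min_le_left (x + ε) 1]
  · have hbx : S.b i ≤ x := not_lt.mp fun h => hxi ⟨hax, h⟩
    refine ⟨S.b i, Or.inr ⟨i, rfl⟩, ?_⟩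
    rw [Real.dist_eq, abs_lt]
    constructor <;> linarith [le_max_left (x - ε) 0]

lemma derivedSet_boundarySet_subset :
    derivedSet S.boundarySet ⊆ derivedSet (range S.a ∪ range S.b) := by
  refine (derivedSet_mono _ _ S.boundarySet_subset).trans ?_
  rw [derivedSet_union, derivedSet_closure, (toFinite ({0, 1} : Set ℝ)).derivedSet_eq_empty,
    union_empty]

lemma iterate_derivedSet_boundarySet_eq_empty {n : ℕ}
    (h : derivedSet^[n] (range S.a ∪ range S.b) = ∅) :
    derivedSet^[n + 1] S.boundarySet = ∅ := by
  rw [Function.iterate_succ_apply, ← subset_empty_iff]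
  calc derivedSet^[n] (derivedSet S.boundarySet)
      ⊆ derivedSet^[n] (derivedSet (range S.a ∪ range S.b)) :=
        (Monotone.iterate (fun A B => derivedSet_mono A B) n) S.derivedSet_boundarySet_subset
    _ = derivedSet (derivedSet^[n] (range S.a ∪ range S.b)) := by
        rw [← Function.iterate_succ_apply, Function.iterate_succ_apply']
    _ = ∅ := by rw [h, finite_empty.derivedSet_eq_empty]

variable {S} {α β : ℝ}

lemma canForce_cyl_succ (hα : 0 < α) (hα2 : α ≤ 1 / 2) {n : ℕ}
    (hE : derivedSet^[n] (range S.a ∪ range S.b) = ∅) {w : ℕ → ι} {k : ℕ} {J : SInt}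
    (hJ : J.set ⊆ S.cyl w k) (hJ01 : J.set ⊆ Icc 0 1) :
    CanForce α β (fun s => ∃ w, s ⊆ S.cyl w (k + 1)) J := by
  have hcont : ContinuousOn S.f^[k] J.set := (S.continuousOn_iterate_cyl w k).mono hJ
  have hinj : InjOn S.f^[k] J.set := ((S.strictMonoOn_iterate_cyl w k).mono hJ).injOn
  have hbad : derivedSet^[n + 2] (J.set ∩ S.f^[k] ⁻¹' S.boundarySet) = ∅ := by
    have := iterate_derivedSet_Icc_inter_preimage_subset hcont hinj S.boundarySet (n + 1)
    rw [S.iterate_derivedSet_boundarySet_eq_empty hE, preimage_empty, inter_empty,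
      empty_union] at this
    rw [Function.iterate_succ_apply', ← subset_empty_iff]
    exact (derivedSet_mono _ _ this).trans (toFinite _).derivedSet_eq_empty.subset
  refine (canForce_disjoint_of_iterate_derivedSet_eq_empty hα hα2 hbad J).mono
    fun X hXJ hX => ?_
  obtain ⟨i, hi⟩ := exists_subset_Ioo_of_isPreconnected
    (isPreconnected_Icc.image _ (hcont.mono hXJ)) (X.set_nonempty.image _)
    (image_subset_iff.mpr fun x hx => iterate_mem_Icc_of_mem_cyl (hJ (hXJ hx)) (hJ01 (hXJ hx)))
    (disjoint_left.mpr fun _ ⟨x, hx, hfx⟩ hb =>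
      disjoint_left.mp hX hx ⟨hXJ hx, by rwa [mem_preimage, hfx]⟩)
  exact ⟨Function.update w k i, fun x hx =>
    mem_cyl_update_succ (hJ (hXJ hx)) (Ioo_subset_Ico_self (hi (mem_image_of_mem _ hx)))⟩

lemma canForce_cyl (hα : 0 < α) (hα2 : α ≤ 1 / 2) {n : ℕ}
    (hE : derivedSet^[n] (range S.a ∪ range S.b) = ∅) (k : ℕ) {I : SInt}
    (hI : I.set ⊆ Icc 0 1) : CanForce α β (fun s => ∃ w, s ⊆ S.cyl w k) I := by
  induction k with
  | zero =>
    have := S.nonempty_index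
    exact .of_forall hα (by linarith) fun _ _ =>
      ⟨fun _ => Classical.arbitrary ι, by simp [cyl_zero]⟩
  | succ k ih =>
    exact ih.bind fun W hWI ⟨_, hW⟩ B hB =>
      canForce_cyl_succ hα hα2 hE (hB.1.trans hW) (hB.1.trans (hWI.trans hI))

end ExpandingSystem

theorem acc_empty_implies_condI_general {ι : Type} [Countable ι] (S : ExpandingSystem ι)
    (n : ℕ)
    (hacc : AccSet^[n] (Set.range S.a ∪ Set.range S.b) = ∅) :
    ∀ α β : ℝ, 0 < α → α ≤ 1/2 → 0 < β → β < 1 →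
      ∀ (k : ℕ) (I : SInt), I.set ⊆ Set.Icc (0:ℝ) 1 →
        WhiteCanReach α β I fun s => ∃ w : ℕ → ι, s ⊆ S.cyl w k := by
  intro α β hα hα2 _ _ k I hI
  exact (S.canForce_cyl hα hα2 hacc k hI).whiteCanReach hα (by linarith)

/-- If the set `E(f)` of endpoints of generation-1 cylinders satisfies `Acc^n(E(f)) = ∅`
for some `n`, then condition (i) holds with any `α ≤ 1/2`: for any `β ∈ (0,1)`, any
generation `k` and any starting interval `I ⊆ [0,1]`, White can in finitely many moves
place his interval inside a single generation-`k` cylinder. -/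
theorem acc_empty_implies_condI {ι : Type} [Countable ι] (S : ExpandingSystem ι)
    (n : ℕ) (hn : 1 ≤ n)
    (hacc : AccSet^[n] (Set.range S.a ∪ Set.range S.b) = ∅) :
    ∀ α β : ℝ, 0 < α → α ≤ 1/2 → 0 < β → β < 1 →
      ∀ (k : ℕ) (I : SInt), I.set ⊆ Set.Icc (0:ℝ) 1 →
        WhiteCanReach α β I fun s => ∃ w : ℕ → ι, s ⊆ S.cyl w k :=
  acc_empty_implies_condI_general S n hacc
end

section
/- There exists a measurable map f defined Lebesgue-almost everywhere on (0,1), piecewise linear and onto [0,1) on each of countably many disjoint intervals whose lengths sum to 1, such that for every α > 0 there exists β > 0 for which the set of points where all iterates of f are defined is not (α,β)-winning for Schmidt's game on [0,1]. -/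
/-!
Cut the block `[2^{-(i+1)}, 2^{-i})` into `N = 4(i+1)` equal cells; `f` maps each odd-indexed
cell affinely onto `[0,1)`, and the construction recurses into the even-indexed cells. The pieces
reached after `k` recursions fill the proportion `2^{-(k+1)}` of the block, so the lengths of all
pieces sum to `1`.

Given `α`, take a block with `α N > 4` and `β = 1 / (α N)`. Black opens with the closed block. If
White plays a legal `W ⊆ B`, then `|W| = α |B| > 4 |B| / N`, so `W` contains an even-indexed cell
of the `N`-adic subdivision of `B`, and its length `|B| / N = β |W|` makes it a legal answer. The
limit point therefore has only even `N`-adic digits inside the block: it lies in no piece, so `f`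
is not even defined there.
-/

theorem IsWinningParam.mono {α β : ℝ} {E F : Set ℝ} (h : IsWinningParam α β E) (hEF : E ⊆ F) :
    IsWinningParam α β F := by
  obtain ⟨ws, hws⟩ := h
  exact ⟨ws, fun B W hB0 hW hB => (hws B W hB0 hW hB).imp_right fun hE x hx => hEF (hE x hx)⟩

noncomputable section

namespace BadMap

open MeasureTheory Set

section Cells

variable (N : ℕ)

-- An interval `[a, a + L)` is encoded as the pair `(a, L)`; `child N p j` is the `j`-th of the `N`
-- equal parts of `p`, and `cell N p w` follows the word `w` down the `N`-adic subdivision.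
def child (p : ℝ × ℝ) (j : ℕ) : ℝ × ℝ := (p.1 + j * (p.2 / N), p.2 / N)

def cell (p : ℝ × ℝ) (w : List ℕ) : ℝ × ℝ := w.foldl (child N) p

def ico (p : ℝ × ℝ) : Set ℝ := Ico p.1 (p.1 + p.2)

variable {N}

@[simp] lemma cell_nil (p : ℝ × ℝ) : cell N p [] = p := rfl

@[simp] lemma cell_cons (p : ℝ × ℝ) (j : ℕ) (w : List ℕ) :
    cell N p (j :: w) = cell N (child N p j) w := rfl

lemma cell_concat (p : ℝ × ℝ) (w : List ℕ) (j : ℕ) :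
    cell N p (w ++ [j]) = child N (cell N p w) j := by
  simp [cell, List.foldl_append]

lemma cell_snd (p : ℝ × ℝ) (w : List ℕ) : (cell N p w).2 = p.2 / N ^ w.length := by
  induction w generalizing p with
  | nil => simp
  | cons j w ih => rw [cell_cons, ih, child, List.length_cons, pow_succ', div_div]

lemma ico_child_subset {p : ℝ × ℝ} (hp : 0 ≤ p.2) {j : ℕ} (hj : j < N) :
    ico (child N p j) ⊆ ico p := by
  have hjN : (j : ℝ) + 1 ≤ N := by exact_mod_cast hj
  have hNp : (N : ℝ) * (p.2 / N) = p.2 :=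
    mul_div_cancel₀ _ (by linarith [j.cast_nonneg (α := ℝ)])
  have hℓ : 0 ≤ p.2 / N := div_nonneg hp N.cast_nonneg
  refine Ico_subset_Ico ?_ ?_ <;> simp only [child]
  · nlinarith [j.cast_nonneg (α := ℝ)]
  · nlinarith

lemma disjoint_ico_child {p : ℝ × ℝ} (hp : 0 ≤ p.2) {j j' : ℕ} (hjj' : j < j') :
    Disjoint (ico (child N p j)) (ico (child N p j')) := by
  have hjj'' : (j : ℝ) + 1 ≤ j' := by exact_mod_cast hjj'
  refine Ico_disjoint_Ico_same.mono_right (Ico_subset_Ico ?_ le_rfl)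
  simp only [child]
  nlinarith [div_nonneg hp (Nat.cast_nonneg N : (0 : ℝ) ≤ N)]

lemma ico_cell_subset {p : ℝ × ℝ} (hp : 0 ≤ p.2) {w : List ℕ} (hw : ∀ l ∈ w, l < N) :
    ico (cell N p w) ⊆ ico p := by
  induction w generalizing p with
  | nil => exact le_rfl
  | cons j w ih =>
    have hj : j < N := hw j List.mem_cons_self
    have hw_tail : ∀ l ∈ w, l < N := fun l hl => hw l (List.mem_cons_of_mem _ hl)
    exact (ih (div_nonneg hp N.cast_nonneg) hw_tail).trans (ico_child_subset hp hj)

lemma mem_ico_of_mem_Icc_child {p : ℝ × ℝ} (hp : 0 < p.2) {j : ℕ} (hj : j + 1 < N)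
    {x : ℝ} (hx : x ∈ Icc (child N p j).1 ((child N p j).1 + (child N p j).2)) : x ∈ ico p := by
  have hjN : (j : ℝ) + 2 ≤ N := by exact_mod_cast hj
  have hN : (0 : ℝ) < N := by linarith [j.cast_nonneg (α := ℝ)]
  have hℓ : 0 < p.2 / N := div_pos hp hN
  have hNℓ : (N : ℝ) * (p.2 / N) = p.2 := mul_div_cancel₀ _ hN.ne'
  simp only [child] at hx
  exact ⟨by nlinarith [hx.1, j.cast_nonneg (α := ℝ)], by nlinarith [hx.2]⟩

lemma disjoint_ico_cell {p : ℝ × ℝ} (hp : 0 ≤ p.2) {w w' : List ℕ} (hw : ∀ l ∈ w, l < N)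
    (hw' : ∀ l ∈ w', l < N) {t : ℕ} (ht : t < w.length) (ht' : t < w'.length)
    (hne : w[t]? ≠ w'[t]?) : Disjoint (ico (cell N p w)) (ico (cell N p w')) := by
  induction w generalizing p w' t with
  | nil => simp at ht
  | cons j w ih =>
    obtain _ | ⟨j', w'⟩ := w'
    · simp at ht'
    have hℓ : 0 ≤ p.2 / N := div_nonneg hp N.cast_nonneg
    have hw_tail : ∀ l ∈ w, l < N := fun l hl => hw l (List.mem_cons_of_mem _ hl)
    have hw'_tail : ∀ l ∈ w', l < N := fun l hl => hw' l (List.mem_cons_of_mem _ hl)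
    rw [cell_cons, cell_cons]
    rcases lt_trichotomy j j' with hlt | rfl | hgt
    · exact (disjoint_ico_child hp hlt).mono (ico_cell_subset hℓ hw_tail)
        (ico_cell_subset hℓ hw'_tail)
    · obtain _ | t := t
      · simp at hne
      · exact ih hℓ hw_tail hw'_tail (by simpa using ht) (by simpa using ht') (by simpa using hne)
    · exact ((disjoint_ico_child hp hgt).mono (ico_cell_subset hℓ hw'_tail)
        (ico_cell_subset hℓ hw_tail)).symm

end Cells

section Pieces

-- In an interval cut into `2 m` cells, a piece is reached through `k` even-indexed cells `2 e_t`
-- followed by one odd-indexed cell `2 o + 1`.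
abbrev PieceIndex (m : ℕ) : Type := Σ k : ℕ, (Fin k → Fin m) × Fin m

variable {m : ℕ}

def pieceWord (q : PieceIndex m) : List ℕ :=
  List.ofFn (fun t => 2 * (q.2.1 t : ℕ)) ++ [2 * (q.2.2 : ℕ) + 1]

@[simp] lemma length_pieceWord (q : PieceIndex m) : (pieceWord q).length = q.1 + 1 := by
  simp [pieceWord]

lemma pieceWord_lt (q : PieceIndex m) : ∀ l ∈ pieceWord q, l < 2 * m := by
  intro l hl
  simp only [pieceWord, List.mem_append, List.mem_ofFn, List.mem_singleton] at hl
  rcases hl with ⟨t, rfl⟩ | rfl <;> omega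

lemma getElem?_pieceWord_of_lt (q : PieceIndex m) {t : ℕ} (ht : t < q.1) :
    (pieceWord q)[t]? = some (2 * (q.2.1 ⟨t, ht⟩ : ℕ)) := by
  simp [pieceWord, List.getElem?_append_left, ht]

lemma getElem?_pieceWord_self (q : PieceIndex m) :
    (pieceWord q)[q.1]? = some (2 * (q.2.2 : ℕ) + 1) := by
  simp [pieceWord]

lemma exists_getElem?_ne_pieceWord {q q' : PieceIndex m} (hne : q ≠ q') :
    ∃ t, t < q.1 + 1 ∧ t < q'.1 + 1 ∧ (pieceWord q)[t]? ≠ (pieceWord q')[t]? := by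
  obtain ⟨k, es, o⟩ := q
  obtain ⟨k', es', o'⟩ := q'
  rcases lt_trichotomy k k' with hlt | rfl | hgt
  · refine ⟨k, by dsimp only; omega, by dsimp only; omega, ?_⟩
    rw [getElem?_pieceWord_self, getElem?_pieceWord_of_lt _ hlt]
    simp only [ne_eq, Option.some.injEq]
    omega
  · by_cases hes : es = es'
    · subst hes
      have ho : o ≠ o' := fun h => hne (by rw [h])
      refine ⟨k, by dsimp only; omega, by dsimp only; omega, ?_⟩
      rw [getElem?_pieceWord_self, getElem?_pieceWord_self]
      simp only [ne_eq, Option.some.injEq]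
      omega
    · obtain ⟨t, ht⟩ := Function.ne_iff.1 hes
      refine ⟨t, by dsimp only; omega, by dsimp only; omega, ?_⟩
      rw [getElem?_pieceWord_of_lt _ t.2, getElem?_pieceWord_of_lt _ t.2]
      simp only [ne_eq, Option.some.injEq, Fin.eta]
      omega
  · refine ⟨k', by dsimp only; omega, by dsimp only; omega, ?_⟩
    rw [getElem?_pieceWord_self, getElem?_pieceWord_of_lt _ hgt]
    simp only [ne_eq, Option.some.injEq]
    omega

lemma disjoint_ico_cell_pieceWord {p : ℝ × ℝ} (hp : 0 ≤ p.2) {q q' : PieceIndex m}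
    (hne : q ≠ q') :
    Disjoint (ico (cell (2 * m) p (pieceWord q))) (ico (cell (2 * m) p (pieceWord q'))) := by
  obtain ⟨t, ht, ht', hdiff⟩ := exists_getElem?_ne_pieceWord hne
  exact disjoint_ico_cell hp (pieceWord_lt q) (pieceWord_lt q') (by simpa using ht)
    (by simpa using ht') hdiff

lemma disjoint_ico_cell_of_forall_even {p : ℝ × ℝ} (hp : 0 ≤ p.2) {w : List ℕ}
    (hw : ∀ l ∈ w, Even l ∧ l < 2 * m) (q : PieceIndex m) (hlen : w.length = q.1 + 1) :
    Disjoint (ico (cell (2 * m) p w)) (ico (cell (2 * m) p (pieceWord q))) := by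
  have hk : q.1 < w.length := by omega
  refine disjoint_ico_cell hp (fun l hl => (hw l hl).2) (pieceWord_lt q) hk (by simp) ?_
  rw [getElem?_pieceWord_self, List.getElem?_eq_getElem hk]
  have := (hw _ (List.getElem_mem hk)).1
  simp only [ne_eq, Option.some.injEq]
  intro h
  rw [h] at this
  exact Nat.not_even_two_mul_add_one _ this

lemma volume_ico (p : ℝ × ℝ) : volume (ico p) = ENNReal.ofReal p.2 := by
  simp [ico, Real.volume_Ico]

lemma tsum_volume_ico_cell_pieceWord (hm : 0 < m) {p : ℝ × ℝ} (hp : 0 ≤ p.2) :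
    ∑' q : PieceIndex m, volume (ico (cell (2 * m) p (pieceWord q))) = ENNReal.ofReal p.2 := by
  have hgen : ∀ k : ℕ, ∑' _ : (Fin k → Fin m) × Fin m,
      ENNReal.ofReal (p.2 / ((2 * m : ℕ) : ℝ) ^ (k + 1)) = ENNReal.ofReal (p.2 / 2 / 2 ^ k) := by
    intro k
    rw [tsum_fintype, Finset.sum_const, Finset.card_univ, nsmul_eq_mul, ← ENNReal.ofReal_natCast,
      ← ENNReal.ofReal_mul (Nat.cast_nonneg _)]
    congr 1
    simp only [Fintype.card_prod, Fintype.card_fun, Fintype.card_fin]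
    have : (0 : ℝ) < m := by exact_mod_cast hm
    push_cast
    field_simp
    ring
  simp only [ENNReal.tsum_sigma', volume_ico, cell_snd, length_pieceWord]
  rw [tsum_congr hgen, ← ENNReal.ofReal_tsum_of_nonneg (fun k => by positivity)
    (summable_geometric_two' _), tsum_geometric_two']

end Pieces

section Construction

-- The paper's block `i + 1`, cut into `4 (i + 1)` cells.
def block (i : ℕ) : ℝ × ℝ := (1 / 2 ^ (i + 1), 1 / 2 ^ (i + 1))

lemma block_snd_pos (i : ℕ) : 0 < (block i).2 := by simp [block]

lemma block_fst_add_snd (i : ℕ) : (block i).1 + (block i).2 = 1 / 2 ^ i := by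
  rw [block, pow_succ]; field_simp; ring

lemma block_fst_add_snd_le_one (i : ℕ) : (block i).1 + (block i).2 ≤ 1 := by
  simpa [block_fst_add_snd] using one_div_pow_le_one_div_pow_of_le (by norm_num : (1 : ℝ) ≤ 2)
    (Nat.zero_le i)

lemma ico_block_subset_Ioo (i : ℕ) : ico (block i) ⊆ Ioo 0 1 :=
  (Ico_subset_Ioo_left (block_snd_pos i)).trans (Ioo_subset_Ioo_right (block_fst_add_snd_le_one i))

lemma pairwise_disjoint_ico_block :
    Pairwise fun i i' => Disjoint (ico (block i)) (ico (block i')) := by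
  have key : ∀ {i i' : ℕ}, i < i' → Disjoint (ico (block i')) (ico (block i)) := by
    intro i i' h
    refine Ico_disjoint_Ico_same.mono_right (Ico_subset_Ico ?_ le_rfl)
    rw [block_fst_add_snd]
    exact one_div_pow_le_one_div_pow_of_le (by norm_num) h
  intro i i' hne
  rcases hne.lt_or_gt with h | h
  exacts [(key h).symm, key h]

abbrev Addr : Type := Σ i : ℕ, PieceIndex (2 * (i + 1))

instance (i : ℕ) : Nonempty (PieceIndex (2 * (i + 1))) := ⟨⟨0, Fin.elim0, ⟨0, by omega⟩⟩⟩

def piece (a : Addr) : ℝ × ℝ := cell (2 * (2 * (a.1 + 1))) (block a.1) (pieceWord a.2)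

lemma piece_snd_pos (a : Addr) : 0 < (piece a).2 := by
  rw [piece, cell_snd]
  exact div_pos (block_snd_pos _) (by positivity)

lemma ico_piece_subset (a : Addr) : ico (piece a) ⊆ ico (block a.1) :=
  ico_cell_subset (block_snd_pos _).le (pieceWord_lt a.2)

lemma pairwise_disjoint_ico_piece :
    Pairwise fun a a' => Disjoint (ico (piece a)) (ico (piece a')) := by
  rintro ⟨i, q⟩ ⟨i', q'⟩ hne
  by_cases hi : i = i'
  · subst hi
    exact disjoint_ico_cell_pieceWord (block_snd_pos i).le fun h => hne (by subst h; rfl)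
  · exact (pairwise_disjoint_ico_block hi).mono (ico_piece_subset _) (ico_piece_subset _)

lemma tsum_volume_ico_piece : ∑' a : Addr, volume (ico (piece a)) = 1 := by
  have hblock : ∀ i : ℕ, (block i).2 = 1 / 2 / 2 ^ i := fun i => by
    simp only [block]; rw [pow_succ]; ring
  rw [ENNReal.tsum_sigma']
  simp only [piece]
  rw [tsum_congr fun i => tsum_volume_ico_cell_pieceWord (by omega) (block_snd_pos i).le]
  simp only [hblock]
  rw [← ENNReal.ofReal_tsum_of_nonneg (fun i => by positivity) (summable_geometric_two' 1),
    tsum_geometric_two', ENNReal.ofReal_one]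

def normalize (p : ℝ × ℝ) (x : ℝ) : ℝ := p.2⁻¹ * x + -(p.2⁻¹ * p.1)

lemma image_normalize_ico {p : ℝ × ℝ} (hp : 0 < p.2) : normalize p '' ico p = Ico 0 1 := by
  rw [ico, show normalize p = fun x => p.2⁻¹ * x + -(p.2⁻¹ * p.1) from rfl,
    image_affine_Ico (inv_pos.2 hp)]
  congr 1 <;> field_simp <;> ring

lemma exists_measurable_eqOn_normalize :
    ∃ f : ℝ → ℝ, Measurable f ∧ ∀ a : Addr, EqOn f (normalize (piece a)) (ico (piece a)) :=
  exists_measurable_piecewise (fun a => ico (piece a)) (fun _ => measurableSet_Ico)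
    (fun a => normalize (piece a)) (fun _ => (measurable_const_mul _).add_const _)
    fun _ _ h => by simp [(pairwise_disjoint_ico_piece h).inter_eq]

end Construction

section Game

def play (move : SInt → SInt → SInt) (B₀ : SInt) (ws : List SInt → SInt) : ℕ → SInt
  | 0 => B₀
  | n + 1 => move (play move B₀ ws n) (ws (List.ofFn fun i : Fin (n + 1) => play move B₀ ws i))

theorem not_isWinningParam_of_strategy {α β : ℝ} {E : Set ℝ} (move : SInt → SInt → SInt)
    (hmove : ∀ B W, legalMove β (move B W) W) (B₀ : SInt) (hB₀ : B₀.set ⊆ Icc 0 1)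
    (hescape : ∀ B W : ℕ → SInt, B 0 = B₀ → (∀ n, B (n + 1) = move (B n) (W n)) →
      (∀ n, legalMove α (W n) (B n)) → ∀ x, (∀ n, x ∈ (B n).set) → x ∉ E) :
    ¬ IsWinningParam α β E := by
  rintro ⟨ws, hws⟩
  set B := play move B₀ ws
  set W : ℕ → SInt := fun n => ws (List.ofFn fun i : Fin (n + 1) => B i)
  have hB0 : B 0 = B₀ := by simp only [B, play]
  have hB : ∀ n, B (n + 1) = move (B n) (W n) := fun n => by simp only [B, W, play]
  obtain ⟨hW, hcap⟩ := hws B W (hB0 ▸ hB₀) (fun n => rfl) fun n => hB n ▸ hmove _ _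
  have hnested : ∀ n, (B (n + 1)).set ⊆ (B n).set := fun n =>
    (hB n ▸ (hmove _ _).1).trans (hW n).1
  obtain ⟨x, hx⟩ := IsCompact.nonempty_iInter_of_sequence_nonempty_isCompact_isClosed
    (fun n => (B n).set) hnested (fun n => nonempty_Icc.2 (by linarith [(B n).rpos]))
    isCompact_Icc fun n => isClosed_Icc
  rw [mem_iInter] at hx
  exact hescape B W hB0 hB hW x hx (hcap x fun n => (hB n ▸ (hmove _ _).1) (hx (n + 1)))

def closedCell (p : ℝ × ℝ) (hp : 0 < p.2) : SInt := ⟨p.1 + p.2 / 2, p.2 / 2, half_pos hp⟩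

def leftLength (I : SInt) : ℝ × ℝ := (I.c - I.r, 2 * I.r)

lemma set_eq_Icc_leftLength (I : SInt) :
    I.set = Icc (leftLength I).1 ((leftLength I).1 + (leftLength I).2) := by
  simp only [SInt.set, leftLength]; ring_nf

@[simp] lemma leftLength_closedCell (p : ℝ × ℝ) (hp : 0 < p.2) :
    leftLength (closedCell p hp) = p := by
  simp only [closedCell, leftLength]; ext <;> ring

-- The leftmost even-indexed cell of the grid of mesh `2 β |W|` anchored at the left end of `B`
-- that starts inside `W`. It fits in `W` whenever `3 β ≤ 1`, and when `W` was a legal move it is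
-- an even-indexed cell of the `N`-adic subdivision of `B`, where `α β N = 1`.
def blackMove (β : ℝ) (hβ : 0 < β) (B W : SInt) : SInt :=
  closedCell (B.c - B.r + 2 * ⌈(W.c - W.r - (B.c - B.r)) / (4 * β * W.r)⌉ * (2 * β * W.r),
    2 * β * W.r) (by have := W.rpos; positivity)

lemma leftLength_blackMove (β : ℝ) (hβ : 0 < β) (B W : SInt) :
    leftLength (blackMove β hβ B W) =
      (B.c - B.r + 2 * ⌈(W.c - W.r - (B.c - B.r)) / (4 * β * W.r)⌉ * (2 * β * W.r),
        2 * β * W.r) :=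
  leftLength_closedCell _ _

lemma legalMove_blackMove {β : ℝ} (hβ : 0 < β) (hβ3 : 3 * β ≤ 1) (B W : SInt) :
    legalMove β (blackMove β hβ B W) W := by
  have hr := W.rpos
  set y := (W.c - W.r - (B.c - B.r)) / (4 * β * W.r)
  have hk1 := (div_le_iff₀ (by positivity)).1 (Int.le_ceil y)
  have hk2 := (lt_div_iff₀ (by positivity)).1 (sub_lt_iff_lt_add.2 (Int.ceil_lt_add_one y))
  refine ⟨?_, by simp only [blackMove, closedCell]; ring⟩
  rw [set_eq_Icc_leftLength, leftLength_blackMove, SInt.set]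
  refine Icc_subset_Icc (by linarith) ?_
  nlinarith

lemma exists_leftLength_blackMove_eq_child {α β : ℝ} (hβ : 0 < β) (hβ3 : 3 * β ≤ 1) {N : ℕ}
    (hN : Even N) (hαβN : α * β * N = 1) {B W : SInt} (hW : legalMove α W B) :
    ∃ j : ℕ, Even j ∧ j + 1 < N ∧ leftLength (blackMove β hβ B W) = child N (leftLength B) j := by
  have hsub := (legalMove_blackMove hβ hβ3 B W).1.trans hW.1
  have hBr := B.rpos
  have hℓ : 0 < 2 * β * W.r := by have := W.rpos; positivity
  rw [set_eq_Icc_leftLength, set_eq_Icc_leftLength B, leftLength_blackMove,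
    Icc_subset_Icc_iff (by simp only; linarith)] at hsub
  simp only [leftLength] at hsub
  obtain ⟨hleft, hright⟩ := hsub
  have hNpos : (0 : ℝ) < N := Nat.cast_pos.2 (Nat.pos_of_ne_zero (by rintro rfl; simp at hαβN))
  have hstep : 2 * β * W.r = 2 * B.r / N := by
    rw [hW.2, eq_div_iff hNpos.ne']
    linear_combination 2 * B.r * hαβN
  obtain ⟨k, hk⟩ : ∃ k : ℕ, ⌈(W.c - W.r - (B.c - B.r)) / (4 * β * W.r)⌉ = k := by
    refine Int.eq_ofNat_of_zero_le ?_
    have : (0 : ℝ) ≤ ⌈(W.c - W.r - (B.c - B.r)) / (4 * β * W.r)⌉ := by nlinarith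
    exact_mod_cast this
  rw [hk] at hright
  push_cast at hright
  have hNℓ : (N : ℝ) * (2 * β * W.r) = 2 * B.r := by
    rw [hstep]; field_simp
  have hkN : 2 * k + 1 ≤ N := by
    have : ((2 * k + 1 : ℕ) : ℝ) * (2 * β * W.r) ≤ N * (2 * β * W.r) := by push_cast; linarith
    exact_mod_cast le_of_mul_le_mul_right this hℓ
  -- `N` is even, so the odd number `2 k + 1 ≤ N` is in fact `< N`.
  obtain ⟨M, rfl⟩ := hN
  refine ⟨2 * k, even_two_mul k, by exact_mod_cast (by omega : 2 * k + 1 < M + M), ?_⟩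
  rw [leftLength_blackMove, hk, child, leftLength, hstep]
  push_cast
  ring_nf

variable {α β : ℝ} {hβ : 0 < β} {N : ℕ} {B W : ℕ → SInt}

lemma exists_even_word_leftLength_play (hβ3 : 3 * β ≤ 1) (hN : Even N)
    (hαβN : α * β * N = 1) (hB : ∀ n, B (n + 1) = blackMove β hβ (B n) (W n))
    (hW : ∀ n, legalMove α (W n) (B n)) (n : ℕ) :
    ∃ w : List ℕ, w.length = n ∧ (∀ l ∈ w, Even l ∧ l < N) ∧
      leftLength (B n) = cell N (leftLength (B 0)) w := by
  induction n with
  | zero => exact ⟨[], rfl, by simp, rfl⟩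
  | succ n ih =>
    obtain ⟨w, hlen, hw, hcell⟩ := ih
    obtain ⟨j, hj, hjN, hchild⟩ := exists_leftLength_blackMove_eq_child hβ hβ3 hN hαβN (hW n)
    refine ⟨w ++ [j], by simp [hlen], ?_, by rw [hB, hchild, hcell, cell_concat]⟩
    simp only [List.mem_append, List.mem_singleton]
    rintro l (hl | rfl)
    exacts [hw l hl, ⟨hj, by omega⟩]

lemma mem_ico_leftLength_play (hβ3 : 3 * β ≤ 1) (hN : Even N) (hαβN : α * β * N = 1)
    (hB : ∀ n, B (n + 1) = blackMove β hβ (B n) (W n)) (hW : ∀ n, legalMove α (W n) (B n))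
    {x : ℝ} (hx : ∀ n, x ∈ (B n).set) (n : ℕ) : x ∈ ico (leftLength (B n)) := by
  obtain ⟨j, -, hjN, hchild⟩ := exists_leftLength_blackMove_eq_child hβ hβ3 hN hαβN (hW n)
  have hxn := hx (n + 1)
  rw [hB, set_eq_Icc_leftLength, hchild] at hxn
  exact mem_ico_of_mem_Icc_child (by simp only [leftLength]; linarith [(B n).rpos]) hjN hxn

end Game

theorem not_isWinningParam_iUnion_ico_piece {α : ℝ} (hα : 0 < α) :
    ∃ β : ℝ, 0 < β ∧ β < 1 ∧ ¬ IsWinningParam α β (⋃ a : Addr, ico (piece a)) := by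
  obtain ⟨i, hi⟩ := exists_nat_one_div_lt hα
  set N := 2 * (2 * (i + 1))
  have hαN : 4 < α * N := by
    have := (div_lt_iff₀ (by positivity)).1 hi
    simp only [N]; push_cast; linarith
  have hβ : 0 < 1 / (α * N) := by positivity
  have hβ4 : 1 / (α * N) < 1 / 4 := one_div_lt_one_div_of_lt (by norm_num) hαN
  have hαβN : α * (1 / (α * N)) * N = 1 := by field_simp [show (N : ℝ) ≠ 0 by positivity]
  refine ⟨1 / (α * N), hβ, by linarith, not_isWinningParam_of_strategy (blackMove _ hβ)
    (legalMove_blackMove hβ (by linarith)) (closedCell (block i) (block_snd_pos i)) ?_ ?_⟩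
  · rw [set_eq_Icc_leftLength, leftLength_closedCell]
    exact Icc_subset_Icc (block_snd_pos i).le (block_fst_add_snd_le_one i)
  intro B W hB0 hB hW x hx hxU
  have hxB := mem_ico_leftLength_play (by linarith) (even_two_mul _) hαβN hB hW hx
  obtain ⟨⟨i', q⟩, hxq⟩ := mem_iUnion.1 hxU
  rcases eq_or_ne i i' with rfl | hne
  · obtain ⟨w, hlen, hw, hcell⟩ := exists_even_word_leftLength_play (by linarith) (even_two_mul _)
      hαβN hB hW (q.1 + 1)
    have hxw := hxB (q.1 + 1)
    rw [hcell, hB0, leftLength_closedCell] at hxw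
    exact disjoint_left.1 (disjoint_ico_cell_of_forall_even (block_snd_pos i).le hw q hlen) hxw hxq
  · have hx0 := hxB 0
    rw [hB0, leftLength_closedCell] at hx0
    exact disjoint_left.1 (pairwise_disjoint_ico_block hne) hx0 (ico_piece_subset ⟨i', q⟩ hxq)

end BadMap

end

open BadMap

open MeasureTheory

/-- **A bad example.**  There exists a measurable map `f`, defined (via countably many
disjoint half-open subintervals `I j` of `(0,1)` whose lengths sum to `1`) Lebesgue-almost
everywhere on `(0,1)`, linear and onto `[0,1)` on each piece, such that for every `α > 0`
there is `β ∈ (0,1)` for which the set of points all of whose iterates stay in the domain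
of definition `⋃ j, I j` is not `(α,β)`-winning for Schmidt's game on `[0,1]`. -/
theorem exists_bad_map :
    ∃ (I : ℕ → Set ℝ) (f : ℝ → ℝ), Measurable f ∧
      (∀ j, ∃ a b : ℝ, a < b ∧ I j = Set.Ico a b) ∧
      (∀ j, I j ⊆ Set.Ioo (0:ℝ) 1) ∧
      (Pairwise fun i j => Disjoint (I i) (I j)) ∧
      (∑' j, volume (I j)) = 1 ∧
      (∀ j, ∃ c d : ℝ, ∀ x ∈ I j, f x = c * x + d) ∧
      (∀ j, f '' I j = Set.Ico (0:ℝ) 1) ∧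
      ∀ α : ℝ, 0 < α →
        ∃ β : ℝ, 0 < β ∧ β < 1 ∧
          ¬ IsWinningParam α β {x | ∀ n : ℕ, f^[n] x ∈ ⋃ j, I j} := by
  obtain ⟨e⟩ : Nonempty (ℕ ≃ Addr) := inferInstance
  obtain ⟨f, hf_meas, hf⟩ := exists_measurable_eqOn_normalize
  refine ⟨fun j => ico (piece (e j)), f, hf_meas,
    fun j => ⟨_, _, lt_add_of_pos_right _ (piece_snd_pos (e j)), rfl⟩,
    fun j => (ico_piece_subset _).trans (ico_block_subset_Ioo _),
    fun j j' h => pairwise_disjoint_ico_piece (e.injective.ne h),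
    (e.tsum_eq fun a => volume (ico (piece a))).trans tsum_volume_ico_piece,
    fun j => ⟨_, _, hf (e j)⟩,
    fun j => (hf (e j)).image_eq.trans (image_normalize_ico (piece_snd_pos _)),
    fun α hα => ?_⟩
  obtain ⟨β, hβ, hβ1, hβ_not⟩ := not_isWinningParam_iUnion_ico_piece hα
  refine ⟨β, hβ, hβ1, fun hwin => hβ_not (hwin.mono fun x hx => ?_)⟩
  obtain ⟨j, hj⟩ := Set.mem_iUnion.1 (hx 0)
  exact Set.mem_iUnion.2 ⟨e j, hj⟩
end
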